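/- For all positive integers N and M and any family of positive real numbers p(i,j,l) (for i,l in {1,...,N} and j in {1,...,M}), the Monte Carlo mutual information estimator Î = (1/(NM)) · Σ_{i=1}^{N} Σ_{j=1}^{M} [ log p(i,j,i) − log( (1/N) · Σ_{l=1}^{N} p(i,j,l) ) ] satisfies Î ≤ log N. -/
import Mathlib


/-- The Monte Carlo mutual information estimator is upper bounded by `log N`. -/
theorem mc_mi_estimator_le_log
    (N M : ℕ) (hN : 0 < N) (hM : 0 < M)
    (p : Fin N → Fin M → Fin N → ℝ)
    (hp : ∀ i j l, 0 < p i j l) :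
    (1 / ((N : ℝ) * (M : ℝ))) *
        ∑ i : Fin N, ∑ j : Fin M,
          (Real.log (p i j i) -
            Real.log ((1 / (N : ℝ)) * ∑ l : Fin N, p i j l))
      ≤ Real.log N := by
  have hNpos : (0:ℝ) < N := by exact_mod_cast hN
  have hMpos : (0:ℝ) < M := by exact_mod_cast hM
  have key : ∀ i j, Real.log (p i j i) -
      Real.log ((1 / (N : ℝ)) * ∑ l : Fin N, p i j l) ≤ Real.log N := by
    intro i j
    have hS : (0:ℝ) < ∑ l : Fin N, p i j l :=
      Finset.sum_pos (fun l _ => hp i j l) ⟨i, Finset.mem_univ i⟩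
    have hb : (0:ℝ) < (1 / (N : ℝ)) * ∑ l : Fin N, p i j l :=
      mul_pos (by positivity) hS
    rw [← Real.log_div (ne_of_gt (hp i j i)) (ne_of_gt hb)]
    apply Real.log_le_log (div_pos (hp i j i) hb)
    rw [div_le_iff₀ hb]
    have hle : p i j i ≤ ∑ l : Fin N, p i j l :=
      Finset.single_le_sum (fun l _ => (hp i j l).le) (Finset.mem_univ i)
    calc p i j i ≤ ∑ l : Fin N, p i j l := hle
      _ = (N:ℝ) * ((1 / (N : ℝ)) * ∑ l : Fin N, p i j l) := by
          field_simp
  have hsum : ∑ i : Fin N, ∑ j : Fin M,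
      (Real.log (p i j i) -
        Real.log ((1 / (N : ℝ)) * ∑ l : Fin N, p i j l))
      ≤ ∑ i : Fin N, ∑ j : Fin M, Real.log N := by
    apply Finset.sum_le_sum; intro i _
    exact Finset.sum_le_sum fun j _ => key i j
  have hconst : ∑ i : Fin N, ∑ j : Fin M, (Real.log N : ℝ)
      = (N:ℝ) * (M:ℝ) * Real.log N := by
    simp [Finset.sum_const, mul_assoc]
  calc (1 / ((N : ℝ) * (M : ℝ))) *
        ∑ i : Fin N, ∑ j : Fin M,
          (Real.log (p i j i) -
            Real.log ((1 / (N : ℝ)) * ∑ l : Fin N, p i j l))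
      ≤ (1 / ((N : ℝ) * (M : ℝ))) * ((N:ℝ) * (M:ℝ) * Real.log N) := by
        apply mul_le_mul_of_nonneg_left _ (by positivity)
        rw [← hconst]; exact hsum
    _ = Real.log N := by field_simp
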